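/- arXiv:1007.4655 — 2 statements merged into one kernel-verified Lean document; each statement's English description precedes it below -/
import Mathlib

section
/- Let A be a unital C*-algebra, I a closed two-sided ideal of A, and a ∈ A. Then max{r(a), ‖π(a)‖} = inf{‖(1+e) a (1+e)⁻¹‖ : e ∈ I and 1 + e is invertible in A}. -/
/-!
Conjugating by `u` with `π u = 1` changes neither the spectrum of `a` nor `π a`, so
`max (r a) ‖π a‖ ≤ ‖u a u⁻¹‖`. For the reverse inequality rescale so that `r(x) < 1` and
`‖π x‖ ≤ 1`. The cutoff `p = g (x x⋆)`, `g t = (max t 1)⁻¹`, satisfies `p ≤ 1`, `π p = 1` and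
`x⋆ p x ≤ 1`, because `t g t ≤ 1`. Since `r(x) < 1`, the Stein series
`D = ∑ (xᵏ)⋆ (1 - p) xᵏ` converges, is positive, is killed by `π`, and solves
`x⋆ D x = D - (1 - p)`. Hence `h = 1 + x⋆ D x` is invertible with `π h = 1` and
`x⋆ h x = x⋆ p x + x⋆ D x ≤ h`, and this inequality says exactly that `‖h^{1/2} x h^{-1/2}‖ ≤ 1`.
-/

open scoped ENNReal NNReal CStarAlgebra
open Filter

namespace spectrum

lemma spectralRadius_smul {𝕜 A : Type*} [NormedField 𝕜] [Ring A] [Algebra 𝕜 A]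
    (k : 𝕜) (a : A) : spectralRadius 𝕜 (k • a) = ‖k‖₊ * spectralRadius 𝕜 a := by
  rcases eq_or_ne k 0 with rfl | hk
  · simp [spectralRadius_zero]
  · have h : spectrum 𝕜 (k • a) = (k • ·) '' spectrum 𝕜 a := by
      simpa [← Set.image_smul] using unit_smul_eq_smul a (Units.mk0 k hk)
    simp only [spectralRadius, h, iSup_image, nnnorm_smul, ENNReal.coe_mul, ENNReal.mul_iSup]

lemma eventually_nnnorm_pow_le_of_spectralRadius_lt {A : Type*} [NormedRing A]
    [NormedAlgebra ℂ A] [CompleteSpace A] (a : A) {r : ℝ≥0} (hr : spectralRadius ℂ a < r) :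
    ∀ᶠ n in atTop, ‖a ^ n‖₊ ≤ r ^ n := by
  filter_upwards [(pow_nnnorm_pow_one_div_tendsto_nhds_spectralRadius a).eventually_lt_const hr,
    eventually_gt_atTop 0] with n hn hn0
  have := ENNReal.rpow_le_rpow hn.le (Nat.cast_nonneg n)
  rwa [← ENNReal.rpow_mul, one_div_mul_cancel (by exact_mod_cast hn0.ne'), ENNReal.rpow_one,
    ENNReal.rpow_natCast, ← ENNReal.coe_pow, ENNReal.coe_le_coe] at this

end spectrum

section Stein

variable {A : Type*} [NormedRing A] [StarRing A] [NormedStarGroup A] [NormedAlgebra ℂ A]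
  [CompleteSpace A] {x : A}

lemma summable_star_pow_mul_mul_pow (hx : spectralRadius ℂ x < 1) (m : A) :
    Summable fun k ↦ star (x ^ k) * m * x ^ k := by
  obtain ⟨r, hxr, hr1⟩ := ENNReal.lt_iff_exists_nnreal_btwn.mp hx
  have hr1 : (r : ℝ) ^ 2 < 1 := pow_lt_one₀ r.2 (by exact_mod_cast hr1) two_ne_zero
  refine .of_norm_bounded_eventually_nat
    ((summable_geometric_of_lt_one (by positivity) hr1).mul_left ‖m‖) ?_
  filter_upwards [spectrum.eventually_nnnorm_pow_le_of_spectralRadius_lt x hxr] with k hk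
  have hk : ‖x ^ k‖ ≤ r ^ k := by exact_mod_cast hk
  calc ‖star (x ^ k) * m * x ^ k‖ ≤ ‖star (x ^ k)‖ * ‖m‖ * ‖x ^ k‖ := norm_mul₃_le
    _ ≤ r ^ k * ‖m‖ * r ^ k := by rw [norm_star]; gcongr
    _ = ‖m‖ * ((r : ℝ) ^ 2) ^ k := by ring

lemma star_mul_tsum_star_pow_mul_mul_pow_mul (hx : spectralRadius ℂ x < 1) (m : A) :
    star x * (∑' k, star (x ^ k) * m * x ^ k) * x = (∑' k, star (x ^ k) * m * x ^ k) - m := by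
  have hs := summable_star_pow_mul_mul_pow hx m
  calc star x * (∑' k, star (x ^ k) * m * x ^ k) * x
      = ∑' k, star x * (star (x ^ k) * m * x ^ k) * x := by
        rw [← hs.tsum_mul_left, ← (hs.mul_left _).tsum_mul_right]
    _ = ∑' k, star (x ^ (k + 1)) * m * x ^ (k + 1) := by
        congr with k
        rw [pow_succ, star_mul]
        noncomm_ring
    _ = (∑' k, star (x ^ k) * m * x ^ k) - m := by
        rw [hs.tsum_eq_zero_add]
        simp

end Stein

section CStarAlgebra

variable {A : Type*} [CStarAlgebra A] {B : Type*} [CStarAlgebra B]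

lemma max_spectralRadius_nnnorm_le_nnnorm_units_mul_mul_inv (π : A →⋆ₐ[ℂ] B) (a : A) {u : Aˣ}
    (hu : π (↑u - 1) = 0) :
    max (spectralRadius ℂ a) ‖π a‖₊ ≤ ‖(u : A) * a * ↑u⁻¹‖₊ := by
  obtain hA | hA := subsingleton_or_nontrivial A
  · simp [Subsingleton.elim a 0]
  have hπu : π u = 1 := by rwa [map_sub, map_one, sub_eq_zero] at hu
  have hπu' : π ↑u⁻¹ = 1 := by rw [← map_one π, ← u.inv_mul, map_mul, hπu, mul_one]
  refine max_le ?_ ?_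
  · rw [spectralRadius, ← spectrum.units_conjugate (u := u)]
    exact spectrum.spectralRadius_le_nnnorm _
  · have : π ((u : A) * a * ↑u⁻¹) = π a := by rw [map_mul, map_mul, hπu, hπu', one_mul, mul_one]
    exact ENNReal.coe_le_coe.2 (this ▸ NonUnitalStarAlgHom.nnnorm_apply_le π _)

variable [PartialOrder A] [StarOrderedRing A]

lemma CStarAlgebra.star_mul_self_le_one_iff (y : A) : star y * y ≤ 1 ↔ ‖y‖ ≤ 1 := by
  rw [← CStarAlgebra.norm_le_one_iff_of_nonneg (star y * y), CStarRing.norm_star_mul_self,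
    ← abs_le_one_iff_mul_self_le_one, abs_norm]

lemma CStarAlgebra.mul_star_self_le_one_iff (y : A) : y * star y ≤ 1 ↔ ‖y‖ ≤ 1 := by
  simpa using star_mul_self_le_one_iff (star y)

lemma star_mul_cfc_mul_le_one (x : A) (f : ℝ → ℝ)
    (hf : ContinuousOn f (spectrum ℝ (x * star x)))
    (hf0 : ∀ t ∈ spectrum ℝ (x * star x), 0 ≤ f t)
    (hf1 : ∀ t ∈ spectrum ℝ (x * star x), f t * t ≤ 1) :
    star x * cfc f (x * star x) * x ≤ 1 := by
  set q := cfc (fun t ↦ √(f t)) (x * star x)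
  have hsf : ContinuousOn (fun t ↦ √(f t)) (spectrum ℝ (x * star x)) :=
    Real.continuous_sqrt.comp_continuousOn hf
  have hq : IsSelfAdjoint q := cfc_predicate _ _
  have hqq : cfc f (x * star x) = q * q := by
    rw [← cfc_mul _ _ _ hsf hsf, eq_comm]
    exact cfc_congr fun t ht ↦ Real.mul_self_sqrt (hf0 t ht)
  have hqxq : q * (x * star x) * q = cfc (fun t ↦ √(f t) * t * √(f t)) (x * star x) := by
    rw [cfc_mul (fun t ↦ √(f t) * t) _ _ (hsf.mul (continuousOn_id' _)) hsf,
      cfc_mul _ (fun t ↦ t) _ hsf (continuousOn_id' _), cfc_id' ℝ (x * star x)]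
  have hconj : star x * cfc f (x * star x) * x = star (q * x) * (q * x) := by
    rw [hqq, star_mul, hq.star_eq]
    noncomm_ring
  rw [hconj, CStarAlgebra.star_mul_self_le_one_iff, ← CStarAlgebra.mul_star_self_le_one_iff,
    star_mul, hq.star_eq, show q * x * (star x * q) = q * (x * star x) * q by noncomm_ring, hqxq]
  refine cfc_le_one _ _ fun t ht ↦ ?_
  rw [mul_right_comm, Real.mul_self_sqrt (hf0 t ht)]
  exact hf1 t ht

lemma exists_le_one_map_eq_one_star_mul_mul_le_one (π : A →⋆ₐ[ℂ] B) {x : A}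
    (hx : ‖π x‖ ≤ 1) : ∃ p : A, p ≤ 1 ∧ π p = 1 ∧ star x * p * x ≤ 1 := by
  set g : ℝ → ℝ := fun t ↦ (max t 1)⁻¹
  have hmax (t : ℝ) : 0 < max t 1 := zero_lt_one.trans_le (le_max_right t 1)
  have hg : Continuous g := (continuous_id.max continuous_const).inv₀ fun t ↦ (hmax t).ne'
  refine ⟨cfc g (x * star x), cfc_le_one _ _ fun t _ ↦ inv_le_one_of_one_le₀ (le_max_right t 1),
    ?_, star_mul_cfc_mul_le_one x g hg.continuousOn (fun t _ ↦ (inv_pos.2 (hmax t)).le)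
      fun t _ ↦ ?_⟩
  · nontriviality B
    have hπx : ‖π (x * star x)‖ ≤ 1 := by
      rw [map_mul, map_star, CStarRing.norm_self_mul_star]
      exact mul_le_one₀ hx (norm_nonneg _) hx
    have hπc := (IsSelfAdjoint.mul_star_self x).map π
    rw [StarAlgHom.map_cfc π g _ hg.continuousOn (map_continuous π) (.mul_star_self x) hπc,
      ← cfc_const_one ℝ (π (x * star x)) hπc]
    refine cfc_congr fun t ht ↦ ?_
    have : t ≤ 1 := (le_abs_self t).trans ((spectrum.norm_le_norm_of_mem ht).trans hπx)
    simp [g, max_eq_right this]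
  · calc g t * t ≤ (max t 1)⁻¹ * max t 1 := by gcongr; exact le_max_left t 1
      _ = 1 := inv_mul_cancel₀ (hmax t).ne'

lemma StarAlgHom.map_cfcSqrt [PartialOrder B] [StarOrderedRing B] (π : A →⋆ₐ[ℂ] B) {a : A}
    (ha : 0 ≤ a) : π (CFC.sqrt a) = CFC.sqrt (π a) :=
  (CFC.sqrt_unique (by rw [← map_mul, CFC.sqrt_mul_sqrt_self a ha])
    (map_nonneg π (CFC.sqrt_nonneg a))).symm

lemma norm_units_mul_mul_inv_le_one (u : Aˣ) {x : A}
    (h : star x * (star (u : A) * u) * x ≤ star (u : A) * u) : ‖(u : A) * x * ↑u⁻¹‖ ≤ 1 := by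
  rw [← CStarAlgebra.star_mul_self_le_one_iff]
  calc star ((u : A) * x * ↑u⁻¹) * ((u : A) * x * ↑u⁻¹)
      = star (↑u⁻¹ : A) * (star x * (star (u : A) * u) * x) * ↑u⁻¹ := by
        simp only [star_mul]; noncomm_ring
    _ ≤ star (↑u⁻¹ : A) * (star (u : A) * u) * ↑u⁻¹ := star_left_conjugate_le_conjugate h _
    _ = 1 := by
        rw [← mul_assoc, ← star_mul, Units.mul_inv, star_one, one_mul, Units.mul_inv]

lemma exists_units_map_sub_one_eq_zero_norm_mul_mul_inv_le_one [PartialOrder B]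
    [StarOrderedRing B] (π : A →⋆ₐ[ℂ] B) {x : A} (hx : spectralRadius ℂ x < 1)
    (hπx : ‖π x‖ ≤ 1) : ∃ u : Aˣ, π (↑u - 1) = 0 ∧ ‖(u : A) * x * ↑u⁻¹‖ ≤ 1 := by
  obtain ⟨p, hp1, hπp, hxp⟩ := exists_le_one_map_eq_one_star_mul_mul_le_one π hπx
  set D := ∑' k, star (x ^ k) * (1 - p) * x ^ k
  have hD : star x * D * x = D - (1 - p) := star_mul_tsum_star_pow_mul_mul_pow_mul hx _
  have hD0 : 0 ≤ D := tsum_nonneg fun k ↦ star_left_conjugate_nonneg (sub_nonneg.2 hp1) _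
  have hπD : π D = 0 := by
    rw [← ((summable_star_pow_mul_mul_pow hx _).hasSum.map π (map_continuous π)).tsum_eq]
    simp [hπp]
  set h := 1 + star x * D * x
  have hh : IsStrictlyPositive h :=
    isStrictlyPositive_one.add_nonneg (star_left_conjugate_nonneg hD0 x)
  have hxh : star x * h * x ≤ h :=
    calc star x * h * x = star x * x + star x * (star x * D * x) * x := by
          simp only [h]; noncomm_ring
      _ = star x * x + star x * (D - (1 - p)) * x := by rw [hD]
      _ = star x * p * x + star x * D * x := by noncomm_ring
      _ ≤ 1 + star x * D * x := by gcongr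
  have hπh : π h = 1 := by simp [h, hπD]
  obtain ⟨u, hu⟩ := hh.isUnit_cfcSqrt
  have huu : star (u : A) * u = h := by
    rw [hu, (CFC.sqrt_nonneg h).isSelfAdjoint.star_eq, CFC.sqrt_mul_sqrt_self h hh.nonneg]
  refine ⟨u, ?_, norm_units_mul_mul_inv_le_one u (huu ▸ hxh)⟩
  rw [map_sub, hu, StarAlgHom.map_cfcSqrt π hh.nonneg, hπh, CFC.sqrt_one, map_one, sub_self]

lemma exists_units_map_sub_one_eq_zero_nnnorm_mul_mul_inv_le [PartialOrder B]
    [StarOrderedRing B] (π : A →⋆ₐ[ℂ] B) {a : A} {ρ : ℝ≥0} (hr : spectralRadius ℂ a < ρ)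
    (hπa : ‖π a‖₊ ≤ ρ) : ∃ u : Aˣ, π (↑u - 1) = 0 ∧ ‖(u : A) * a * ↑u⁻¹‖₊ ≤ ρ := by
  have hρ : ρ ≠ 0 := by rintro rfl; exact ENNReal.not_lt_zero hr
  set k : ℂ := ((ρ⁻¹ : ℝ≥0) : ℂ)
  have hk : ‖k‖₊ = ρ⁻¹ := by simp [k]
  obtain ⟨u, hu, hnorm⟩ := exists_units_map_sub_one_eq_zero_norm_mul_mul_inv_le_one π
    (x := k • a) (by
      rw [spectrum.spectralRadius_smul, hk, ENNReal.coe_inv hρ, ← ENNReal.div_eq_inv_mul]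
      exact ENNReal.div_lt_of_lt_mul (by simpa using hr))
    (by
      rw [← coe_nnnorm, map_smul, nnnorm_smul, hk, NNReal.coe_le_one,
        inv_mul_le_iff₀ (pos_iff_ne_zero.2 hρ), mul_one]
      exact hπa)
  refine ⟨u, hu, ?_⟩
  rw [← coe_nnnorm, NNReal.coe_le_one, mul_smul_comm, smul_mul_assoc, nnnorm_smul, hk,
    inv_mul_le_iff₀ (pos_iff_ne_zero.2 hρ), mul_one] at hnorm
  exact hnorm

end CStarAlgebra

theorem stmt_3_general
    {A : Type*} [NormedRing A] [StarRing A] [CStarRing A] [CompleteSpace A]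
    [NormedAlgebra ℂ A] [StarModule ℂ A]
    {B : Type*} [NormedRing B] [StarRing B] [CStarRing B] [CompleteSpace B]
    [NormedAlgebra ℂ B] [StarModule ℂ B]
    (π : A →⋆ₐ[ℂ] B)
    (a : A) :
    max (spectralRadius ℂ a) (‖π a‖₊ : ℝ≥0∞)
      = ⨅ (u : Aˣ) (_ : π ((u : A) - 1) = 0),
          (‖(u : A) * a * ((u⁻¹ : Aˣ) : A)‖₊ : ℝ≥0∞) := by
  let : CStarAlgebra A := { }
  let : CStarAlgebra B := { }
  let := CStarAlgebra.spectralOrder A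
  let := CStarAlgebra.spectralOrder B
  have := CStarAlgebra.spectralOrderedRing A
  have := CStarAlgebra.spectralOrderedRing B
  refine le_antisymm (le_iInf₂ fun u hu ↦
    max_spectralRadius_nnnorm_le_nnnorm_units_mul_mul_inv π a hu) ?_
  refine le_of_forall_gt_imp_ge_of_dense fun c hc ↦ ?_
  obtain ⟨ρ, hρ, hρc⟩ := ENNReal.lt_iff_exists_nnreal_btwn.mp hc
  rw [max_lt_iff, ENNReal.coe_lt_coe] at hρ
  obtain ⟨u, hu, hnorm⟩ := exists_units_map_sub_one_eq_zero_nnnorm_mul_mul_inv_le π hρ.1 hρ.2.le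
  exact (iInf₂_le u hu).trans ((ENNReal.coe_le_coe.2 hnorm).trans hρc.le)

theorem stmt_3
    {A : Type*} [NormedRing A] [StarRing A] [CStarRing A] [CompleteSpace A]
    [NormedAlgebra ℂ A] [StarModule ℂ A]
    {B : Type*} [NormedRing B] [StarRing B] [CStarRing B] [CompleteSpace B]
    [NormedAlgebra ℂ B] [StarModule ℂ B]
    (π : A →⋆ₐ[ℂ] B) (hπ : Function.Surjective π)
    (a : A) :
    max (spectralRadius ℂ a) (‖π a‖₊ : ℝ≥0∞)
      = ⨅ (u : Aˣ) (_ : π ((u : A) - 1) = 0),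
          (‖(u : A) * a * ((u⁻¹ : Aˣ) : A)‖₊ : ℝ≥0∞) :=
  stmt_3_general π a
end

section
/- Let A be a unital C*-algebra and a, b ∈ A with ab = ba. Suppose a is similar to a strict contraction (there exists an invertible s ∈ A with ‖s a s⁻¹‖ < 1) and b is similar to a contraction (there exists an invertible t ∈ A with ‖t b t⁻¹‖ ≤ 1). Then there exists a single invertible element c ∈ A such that ‖c a c⁻¹‖ ≤ 1 and ‖c b c⁻¹‖ ≤ 1. -/
/-! With `k = t⋆ t`, the Lyapunov sum `h = ∑ₙ (aⁿ)⋆ k aⁿ` converges since `a` is similar to a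
strict contraction, and solves `h = k + a⋆ h a`. Hence `a⋆ h a ≤ h` and `k ≤ h`, so `h` is
invertible and `h = c⋆ c` for a unit `c`. As `b` commutes with `a`, `b⋆ h b` is the Lyapunov sum of
`b⋆ k b ≤ k`, so `b⋆ h b ≤ h` too. Finally `‖c x c⁻¹‖ ≤ 1 ↔ x⋆ (c⋆ c) x ≤ c⋆ c` for every `x`. -/

section StarOrderedRing

variable {A : Type*} [Ring A] [StarRing A] [PartialOrder A] [StarOrderedRing A]

lemma IsUnit.star_left_conjugate_le_conjugate_iff {u : A} (hu : IsUnit u) {x y : A} :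
    star u * x * u ≤ star u * y * u ↔ x ≤ y := by
  rw [← sub_nonneg, ← sub_nonneg (a := y), ← sub_mul, ← mul_sub]
  exact hu.star_left_conjugate_nonneg_iff

end StarOrderedRing

namespace CStarAlgebra

variable {A : Type*} [CStarAlgebra A] [PartialOrder A] [StarOrderedRing A]

lemma norm_le_one_iff_star_mul_self_le_one (y : A) : ‖y‖ ≤ 1 ↔ star y * y ≤ 1 := by
  rw [← norm_le_one_iff_of_nonneg _ (star_mul_self_nonneg y), CStarRing.norm_star_mul_self,
    ← sq, sq_le_one_iff₀ (norm_nonneg y)]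

lemma norm_units_conj_le_one_iff (c : Aˣ) (x : A) :
    ‖(c : A) * x * ((c⁻¹ : Aˣ) : A)‖ ≤ 1 ↔ star x * (star (c : A) * c) * x ≤ star (c : A) * c := by
  rw [norm_le_one_iff_star_mul_self_le_one, ← c.isUnit.star_left_conjugate_le_conjugate_iff,
    mul_one]
  set y := (c : A) * x * ((c⁻¹ : Aˣ) : A)
  have hyc : y * c = c * x := by simp [y, mul_assoc]
  have hconj : star (c : A) * (star y * y) * c = star x * (star (c : A) * c) * x := by
    calc star (c : A) * (star y * y) * c = star (y * c) * (y * c) := by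
          simp only [star_mul y, mul_assoc]
      _ = star x * (star (c : A) * c) * x := by simp only [hyc, star_mul, mul_assoc]
  rw [hconj]

end CStarAlgebra

section NormedRing

variable {A : Type*} [NormedRing A]

-- Only positive powers: `‖1‖` may exceed `1` in a normed ring.
lemma Units.norm_pow_succ_le_of_conj (s : Aˣ) (a : A) (n : ℕ) :
    ‖a ^ (n + 1)‖ ≤
      ‖((s⁻¹ : Aˣ) : A)‖ * ‖(s : A)‖ * ‖(s : A) * a * ((s⁻¹ : Aˣ) : A)‖ ^ (n + 1) := by
  set y := (s : A) * a * ((s⁻¹ : Aˣ) : A)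
  have hconj : a ^ (n + 1) = ((s⁻¹ : Aˣ) : A) * y ^ (n + 1) * s := by
    rw [s.conj_pow]; simp [mul_assoc]
  calc ‖a ^ (n + 1)‖ ≤ ‖((s⁻¹ : Aˣ) : A)‖ * ‖y ^ (n + 1)‖ * ‖(s : A)‖ := by
        rw [hconj]; exact norm_mul₃_le
    _ ≤ ‖((s⁻¹ : Aˣ) : A)‖ * ‖y‖ ^ (n + 1) * ‖(s : A)‖ := by
        gcongr; exact norm_pow_le' y n.succ_pos
    _ = _ := by ring

variable [StarRing A] [NormedStarGroup A] [CompleteSpace A]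

lemma Units.summable_star_pow_mul_pow_of_norm_conj_lt_one (s : Aˣ) {a : A}
    (ha : ‖(s : A) * a * ((s⁻¹ : Aˣ) : A)‖ < 1) (m : A) :
    Summable fun n : ℕ ↦ star (a ^ n) * m * a ^ n := by
  set r := ‖(s : A) * a * ((s⁻¹ : Aˣ) : A)‖
  set C := ‖((s⁻¹ : Aˣ) : A)‖ * ‖(s : A)‖
  have hr : r * r < 1 := mul_lt_one_of_nonneg_of_lt_one_left (norm_nonneg _) ha ha.le
  refine (summable_nat_add_iff 1).mp <| .of_norm_bounded
    ((summable_geometric_of_lt_one (by positivity) hr).mul_left (C * C * ‖m‖ * (r * r))) fun n ↦ ?_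
  calc ‖star (a ^ (n + 1)) * m * a ^ (n + 1)‖ ≤ ‖a ^ (n + 1)‖ * ‖m‖ * ‖a ^ (n + 1)‖ := by
        simpa only [norm_star] using norm_mul₃_le (a := star (a ^ (n + 1)))
    _ ≤ C * r ^ (n + 1) * ‖m‖ * (C * r ^ (n + 1)) := by
        gcongr <;> exact s.norm_pow_succ_le_of_conj a n
    _ = C * C * ‖m‖ * (r * r) * (r * r) ^ n := by ring

end NormedRing

section Lyapunov

variable {A : Type*} [Ring A] [StarRing A] [TopologicalSpace A] {a k : A}

noncomputable def lyapunovSum (a k : A) : A := ∑' n : ℕ, star (a ^ n) * k * a ^ n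

section Order

variable [PartialOrder A] [StarOrderedRing A] [OrderClosedTopology A]

lemma lyapunovSum_nonneg (hk : 0 ≤ k) : 0 ≤ lyapunovSum a k :=
  tsum_nonneg fun _ ↦ star_left_conjugate_nonneg hk _

lemma lyapunovSum_mono {k' : A} (hk : k ≤ k')
    (hs : Summable fun n : ℕ ↦ star (a ^ n) * k * a ^ n)
    (hs' : Summable fun n : ℕ ↦ star (a ^ n) * k' * a ^ n) :
    lyapunovSum a k ≤ lyapunovSum a k' :=
  hs.tsum_le_tsum (fun _ ↦ star_left_conjugate_le_conjugate hk _) hs'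

end Order

variable [IsTopologicalRing A] [T2Space A]

lemma lyapunovSum_eq_add (hs : Summable fun n : ℕ ↦ star (a ^ n) * k * a ^ n) :
    lyapunovSum a k = k + star a * lyapunovSum a k * a := by
  have htail : ∑' n : ℕ, star (a ^ (n + 1)) * k * a ^ (n + 1) = star a * lyapunovSum a k * a := by
    rw [lyapunovSum, ← hs.tsum_mul_left, ← (hs.mul_left _).tsum_mul_right]
    simp only [pow_succ, star_mul, mul_assoc]
  rw [← htail, lyapunovSum, hs.tsum_eq_zero_add]
  simp

lemma star_mul_lyapunovSum_mul_of_commute {b : A} (hab : Commute a b)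
    (hs : Summable fun n : ℕ ↦ star (a ^ n) * k * a ^ n) :
    star b * lyapunovSum a k * b = lyapunovSum a (star b * k * b) := by
  rw [lyapunovSum, lyapunovSum, ← hs.tsum_mul_left, ← (hs.mul_left _).tsum_mul_right]
  refine tsum_congr fun n ↦ ?_
  have hcomm : a ^ n * b = b * a ^ n := (hab.pow_left n).eq
  have hcomm' : star b * star (a ^ n) = star (a ^ n) * star b := by
    rw [← star_mul, hcomm, star_mul]
  simp only [mul_assoc, hcomm]
  simp only [← mul_assoc, hcomm']

variable [PartialOrder A] [StarOrderedRing A]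

lemma star_mul_lyapunovSum_mul_le (hk : 0 ≤ k)
    (hs : Summable fun n : ℕ ↦ star (a ^ n) * k * a ^ n) :
    star a * lyapunovSum a k * a ≤ lyapunovSum a k := by
  conv_rhs => rw [lyapunovSum_eq_add hs]
  exact le_add_of_nonneg_left hk

lemma le_lyapunovSum [OrderClosedTopology A] (hk : 0 ≤ k)
    (hs : Summable fun n : ℕ ↦ star (a ^ n) * k * a ^ n) :
    k ≤ lyapunovSum a k := by
  rw [lyapunovSum_eq_add hs]
  exact le_add_of_nonneg_right (star_left_conjugate_nonneg (lyapunovSum_nonneg hk) _)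

end Lyapunov

theorem stmt_18
    {A : Type*} [NormedRing A] [StarRing A] [CStarRing A] [CompleteSpace A]
    [NormedAlgebra ℂ A] [StarModule ℂ A]
    (a b : A) (hab : a * b = b * a)
    (ha : ∃ s : Aˣ, ‖(s : A) * a * ((s⁻¹ : Aˣ) : A)‖ < 1)
    (hb : ∃ t : Aˣ, ‖(t : A) * b * ((t⁻¹ : Aˣ) : A)‖ ≤ 1) :
    ∃ c : Aˣ, ‖(c : A) * a * ((c⁻¹ : Aˣ) : A)‖ ≤ 1
      ∧ ‖(c : A) * b * ((c⁻¹ : Aˣ) : A)‖ ≤ 1 := by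
  let _ : CStarAlgebra A := ⟨⟩
  let _ := CStarAlgebra.spectralOrder A
  have _ := CStarAlgebra.spectralOrderedRing A
  obtain ⟨s, hs⟩ := ha
  obtain ⟨t, ht⟩ := hb
  have hsum := s.summable_star_pow_mul_pow_of_norm_conj_lt_one hs
  set k := star (t : A) * t
  have hk : 0 ≤ k := star_mul_self_nonneg _
  have hb' : star b * k * b ≤ k := (CStarAlgebra.norm_units_conj_le_one_iff t b).mp ht
  have hpos : IsStrictlyPositive (lyapunovSum a k) :=
    (CStarAlgebra.isStrictlyPositive_iff_eq_star_mul_self.mpr ⟨(t : A), t.isUnit, rfl⟩).of_le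
      (le_lyapunovSum hk (hsum k))
  obtain ⟨c, hc, hck⟩ := CStarAlgebra.isStrictlyPositive_iff_eq_star_mul_self.mp hpos
  lift c to Aˣ using hc
  refine ⟨c, ?_, ?_⟩
  · rw [CStarAlgebra.norm_units_conj_le_one_iff, ← hck]
    exact star_mul_lyapunovSum_mul_le hk (hsum k)
  · rw [CStarAlgebra.norm_units_conj_le_one_iff, ← hck,
      star_mul_lyapunovSum_mul_of_commute hab (hsum k)]
    exact lyapunovSum_mono hb' (hsum _) (hsum k)
end
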